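/- arXiv:1911.04578 — 7 statements merged into one kernel-verified Lean document; each statement's English description precedes it below -/
import Mathlib

section
/- Let g : ℝ^d → ℝ^d (d ≥ 1) be a continuous, linearly homogeneous map, and let Ω ⊂ ℝ^d be a compact set with 0 ∈ int(Ω). Then the following are equivalent: (i) 0 is an asymptotically stable fixed point of g; (ii) there exists m ≥ 1 such that g^m(Ω) ⊂ int(Ω); (iii) there exists m ≥ 1 such that g^m(Ω) ⊂ int(⋃_{i=0}^{m-1} g^i(Ω)). -/
open Metric Filter

lemma aux_norm_le {d : ℕ} (F : EuclideanSpace ℝ (Fin d) → EuclideanSpace ℝ (Fin d))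
    (hF : ∀ α : ℝ, 0 ≤ α → ∀ x, F (α • x) = α • F x)
    {r C : ℝ} (hr : 0 < r) (hC : 0 < C)
    (h : ∀ y, ‖y‖ < r → ‖F y‖ ≤ C) : ∀ x, ‖F x‖ ≤ (C / r) * ‖x‖ := by
  intro x
  by_contra hlt
  push_neg at hlt
  have h1 : ‖x‖ / r < ‖F x‖ / C := by
    rw [div_lt_div_iff₀ hr hC]
    have h2 : C / r * ‖x‖ * r = ‖x‖ * C := by field_simp
    have h3 := mul_lt_mul_of_pos_right hlt hr
    rw [h2] at h3
    exact h3
  set s : ℝ := (‖x‖ / r + ‖F x‖ / C) / 2 with hs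
  have hxr : 0 ≤ ‖x‖ / r := div_nonneg (norm_nonneg _) hr.le
  have hs1 : ‖x‖ / r < s := by rw [hs]; linarith
  have hs2 : s < ‖F x‖ / C := by rw [hs]; linarith
  have hspos : 0 < s := lt_of_le_of_lt hxr hs1
  set y := s⁻¹ • x with hy
  have hxy : x = s • y := by rw [hy, smul_inv_smul₀ hspos.ne']
  have hny : ‖y‖ < r := by
    rw [hy, norm_smul, Real.norm_eq_abs, abs_of_pos (inv_pos.2 hspos)]
    rw [div_lt_iff₀ hr] at hs1
    calc s⁻¹ * ‖x‖ < s⁻¹ * (r * s) := by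
          apply mul_lt_mul_of_pos_left _ (inv_pos.2 hspos)
          linarith [hs1]
      _ = r := by field_simp
  have : ‖F x‖ = s * ‖F y‖ := by
    rw [hxy, hF s hspos.le, norm_smul, Real.norm_eq_abs, abs_of_pos hspos]
  have hle : ‖F x‖ ≤ s * C := by
    rw [this]; exact mul_le_mul_of_nonneg_left (h y hny) hspos.le
  rw [lt_div_iff₀ hC] at hs2
  linarith

lemma iter_hom {d : ℕ} (g : EuclideanSpace ℝ (Fin d) → EuclideanSpace ℝ (Fin d))
    (hhom : ∀ α : ℝ, 0 ≤ α → ∀ x, g (α • x) = α • g x) :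
    ∀ n : ℕ, ∀ α : ℝ, 0 ≤ α → ∀ x, g^[n] (α • x) = α • g^[n] x := by
  intro n
  induction n with
  | zero => intro α _ x; simp
  | succ n ih =>
    intro α hα x
    rw [Function.iterate_succ_apply, Function.iterate_succ_apply, hhom α hα, ih α hα]

/-- `0` is an asymptotically stable fixed point: Lyapunov stability together with
local attraction. -/
def AsympStableAtZero {d : ℕ} (f : EuclideanSpace ℝ (Fin d) → EuclideanSpace ℝ (Fin d)) : Prop :=
  (∀ ε > (0 : ℝ), ∃ δ > (0 : ℝ), ∀ x ∈ ball (0 : EuclideanSpace ℝ (Fin d)) δ,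
      ∀ i : ℕ, f^[i] x ∈ ball (0 : EuclideanSpace ℝ (Fin d)) ε) ∧
  (∃ δ > (0 : ℝ), ∀ x ∈ ball (0 : EuclideanSpace ℝ (Fin d)) δ,
      Tendsto (fun n : ℕ => f^[n] x) atTop (nhds (0 : EuclideanSpace ℝ (Fin d))))

theorem stmt1 {d : ℕ} (hd : 0 < d)
    (g : EuclideanSpace ℝ (Fin d) → EuclideanSpace ℝ (Fin d))
    (hg : Continuous g)
    (hhom : ∀ α : ℝ, 0 ≤ α → ∀ x : EuclideanSpace ℝ (Fin d), g (α • x) = α • g x)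
    (Ω : Set (EuclideanSpace ℝ (Fin d))) (hΩ : IsCompact Ω)
    (h0 : (0 : EuclideanSpace ℝ (Fin d)) ∈ interior Ω) :
    List.TFAE [AsympStableAtZero g,
      ∃ m : ℕ, 1 ≤ m ∧ g^[m] '' Ω ⊆ interior Ω,
      ∃ m : ℕ, 1 ≤ m ∧ g^[m] '' Ω ⊆ interior (⋃ i ∈ Finset.range m, g^[i] '' Ω)] := by
  have hih := iter_hom g hhom
  have hgi : ∀ n : ℕ, Continuous (g^[n]) := fun n => hg.iterate n
  obtain ⟨r0, hr0, hr0sub⟩ := Metric.isOpen_iff.1 isOpen_interior 0 h0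
  obtain ⟨RΩ, hRΩ, hRΩsub⟩ := hΩ.isBounded.subset_closedBall_lt 0 0
  tfae_have 1 → 2 := by
    rintro ⟨hstab, δ₀, hδ₀, hattr⟩
    obtain ⟨δ, hδ, hδball⟩ := hstab 1 one_pos
    have hbound : ∀ (n : ℕ) x, ‖g^[n] x‖ ≤ (1 / δ) * ‖x‖ := fun n =>
      aux_norm_le _ (hih n) hδ one_pos (fun y hy =>
        (mem_ball_zero_iff.1 (hδball y (mem_ball_zero_iff.2 hy) n)).le)
    -- global attraction
    have hga : ∀ x, Tendsto (fun n : ℕ => g^[n] x) atTop (nhds 0) := by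
      intro x
      set t : ℝ := δ₀ / (‖x‖ + 1) with htdef
      have ht : 0 < t := div_pos hδ₀ (by positivity)
      have hmem : t • x ∈ ball (0 : EuclideanSpace ℝ (Fin d)) δ₀ := by
        rw [mem_ball_zero_iff, norm_smul, Real.norm_eq_abs, abs_of_pos ht]
        have hne : (‖x‖ + 1) ≠ 0 := by positivity
        have : t * (‖x‖ + 1) = δ₀ := by rw [htdef]; exact div_mul_cancel₀ _ hne
        nlinarith [ht]
      have h2 := hattr (t • x) hmem
      have heq : ∀ n : ℕ, g^[n] x = t⁻¹ • g^[n] (t • x) := by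
        intro n; rw [hih n t ht.le, inv_smul_smul₀ ht.ne']
      have h3 := h2.const_smul t⁻¹
      simp only [heq]
      simpa using h3
    -- finite cover of the closed unit ball
    set U : ℕ → Set (EuclideanSpace ℝ (Fin d)) := fun n => {x | ‖g^[n] x‖ < δ / 4} with hU
    have hUopen : ∀ n, IsOpen (U n) := fun n =>
      isOpen_lt (hgi n).norm continuous_const
    have hcover : closedBall (0 : EuclideanSpace ℝ (Fin d)) 1 ⊆ ⋃ n, U n := by
      intro x _
      have h4 : ∀ᶠ n : ℕ in atTop, g^[n] x ∈ ball (0 : EuclideanSpace ℝ (Fin d)) (δ / 4) :=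
        hga x (ball_mem_nhds 0 (by positivity))
      obtain ⟨n, hn⟩ := h4.exists
      exact Set.mem_iUnion.2 ⟨n, mem_ball_zero_iff.1 hn⟩
    obtain ⟨t, ht⟩ := (isCompact_closedBall (0 : EuclideanSpace ℝ (Fin d)) 1).elim_finite_subcover
      U hUopen hcover
    set N : ℕ := t.sup id + 1 with hNdef
    have hNq : ∀ x : EuclideanSpace ℝ (Fin d), ‖x‖ ≤ 1 → ‖g^[N] x‖ ≤ 1 / 4 := by
      intro x hx
      obtain ⟨n, hnt, hxU⟩ := Set.mem_iUnion₂.1 (ht (mem_closedBall_zero_iff.2 hx))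
      have hnN : n ≤ N := le_trans (Finset.le_sup (f := id) hnt) (Nat.le_succ _)
      have hsplit : g^[N] x = g^[N - n] (g^[n] x) := by
        rw [← Function.iterate_add_apply, Nat.sub_add_cancel hnN]
      rw [hsplit]
      calc ‖g^[N - n] (g^[n] x)‖ ≤ (1 / δ) * ‖g^[n] x‖ := hbound _ _
        _ ≤ (1 / δ) * (δ / 4) := by
            apply mul_le_mul_of_nonneg_left hxU.le (by positivity)
        _ = 1 / 4 := by field_simp
    have hq : ∀ x, ‖g^[N] x‖ ≤ (1 / 4) * ‖x‖ := by
      have h5 := aux_norm_le (g^[N]) (hih N) one_pos (by norm_num : (0:ℝ) < 1/4)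
        (fun y hy => hNq y hy.le)
      simpa using h5
    have hpow : ∀ (k : ℕ) x, ‖g^[k * N] x‖ ≤ (1 / 4 : ℝ) ^ k * ‖x‖ := by
      intro k
      induction k with
      | zero => intro x; simp
      | succ k ih =>
        intro x
        have hsp : (k + 1) * N = N + k * N := by ring
        rw [hsp, Function.iterate_add_apply]
        calc ‖g^[N] (g^[k * N] x)‖ ≤ (1 / 4) * ‖g^[k * N] x‖ := hq _
          _ ≤ (1 / 4) * ((1 / 4 : ℝ) ^ k * ‖x‖) := by
              apply mul_le_mul_of_nonneg_left (ih x) (by norm_num)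
          _ = (1 / 4 : ℝ) ^ (k + 1) * ‖x‖ := by ring
    obtain ⟨k, hk⟩ := exists_pow_lt_of_lt_one (div_pos hr0 hRΩ) (by norm_num : (1/4 : ℝ) < 1)
    refine ⟨(k + 1) * N, ?_, ?_⟩
    · have hN1 : 1 ≤ N := Nat.le_add_left 1 _
      exact Nat.one_le_iff_ne_zero.2 (Nat.mul_ne_zero (Nat.succ_ne_zero k)
        (Nat.one_le_iff_ne_zero.1 hN1))
    · rintro y ⟨w, hw, rfl⟩
      apply hr0sub
      rw [mem_ball_zero_iff]
      have h5 : (1 / 4 : ℝ) ^ (k + 1) ≤ (1 / 4 : ℝ) ^ k :=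
        pow_le_pow_of_le_one (by norm_num) (by norm_num) (Nat.le_succ k)
      have h6 : (1 / 4 : ℝ) ^ k * RΩ < r0 := (lt_div_iff₀ hRΩ).1 hk
      have hwR : ‖w‖ ≤ RΩ := mem_closedBall_zero_iff.1 (hRΩsub hw)
      calc ‖g^[(k + 1) * N] w‖ ≤ (1 / 4 : ℝ) ^ (k + 1) * ‖w‖ := hpow _ _
        _ ≤ (1 / 4 : ℝ) ^ (k + 1) * RΩ := by
            apply mul_le_mul_of_nonneg_left hwR (by positivity)
        _ ≤ (1 / 4 : ℝ) ^ k * RΩ := by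
            apply mul_le_mul_of_nonneg_right h5 hRΩ.le
        _ < r0 := h6
  tfae_have 2 → 3 := by
    rintro ⟨m, hm, hsub⟩
    refine ⟨m, hm, hsub.trans (interior_mono ?_)⟩
    intro x hx
    exact Set.mem_biUnion (Finset.mem_range.2 hm) ⟨x, hx, by simp⟩
  tfae_have 3 → 1 := by
    rintro ⟨m, hm, hsub⟩
    set K : Set (EuclideanSpace ℝ (Fin d)) := ⋃ i ∈ Finset.range m, g^[i] '' Ω with hKdef
    have hKcomp : IsCompact K := by
      apply (Finset.range m).finite_toSet.isCompact_biUnion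
      intro i _
      exact hΩ.image (hgi i)
    have hΩK : Ω ⊆ K := fun x hx => Set.mem_biUnion (Finset.mem_range.2 hm) ⟨x, hx, by simp⟩
    have h0K : (0 : EuclideanSpace ℝ (Fin d)) ∈ interior K := interior_mono hΩK h0
    obtain ⟨r, hr, hrK⟩ := Metric.isOpen_iff.1 isOpen_interior 0 h0K
    obtain ⟨R, hR, hRK⟩ := hKcomp.isBounded.subset_closedBall_lt 0 0
    have hg1K : ∀ x ∈ K, g x ∈ K := by
      intro x hx
      obtain ⟨i, hi, hxi⟩ := Set.mem_iUnion₂.1 hx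
      obtain ⟨w, hw, rfl⟩ := hxi
      have hstep : g (g^[i] w) = g^[i + 1] w := (Function.iterate_succ_apply' g i w).symm
      rw [hstep]
      by_cases hcase : i + 1 < m
      · exact Set.mem_biUnion (Finset.mem_range.2 hcase) ⟨w, hw, rfl⟩
      · have him : i + 1 = m := by have := Finset.mem_range.1 hi; omega
        rw [him]
        exact interior_subset (hsub ⟨w, hw, rfl⟩)
    have hgnK : ∀ (n : ℕ), ∀ x ∈ K, g^[n] x ∈ K := by
      intro n
      induction n with
      | zero => intro x hx; simpa using hx
      | succ n ih =>
        intro x hx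
        rw [Function.iterate_succ_apply']
        exact hg1K _ (ih x hx)
    have hbK : ∀ (n : ℕ) x, ‖g^[n] x‖ ≤ (R / r) * ‖x‖ := fun n =>
      aux_norm_le _ (hih n) hr hR (fun y hy =>
        mem_closedBall_zero_iff.1 (hRK (hgnK n y (interior_subset (hrK (mem_ball_zero_iff.2 hy))))))
    constructor
    · -- Lyapunov stability
      intro ε hε
      refine ⟨ε * r / (2 * R), by positivity, ?_⟩
      intro x hx i
      rw [mem_ball_zero_iff] at hx ⊢
      calc ‖g^[i] x‖ ≤ (R / r) * ‖x‖ := hbK i x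
        _ < (R / r) * (ε * r / (2 * R)) := by
            apply mul_lt_mul_of_pos_left hx (by positivity)
        _ = ε / 2 := by field_simp
        _ < ε := by linarith
    · -- attraction
      obtain ⟨ρ, hρ, hρsub⟩ := (hΩ.image (hgi m)).exists_thickening_subset_open
        isOpen_interior hsub
      set lam : ℝ := R / (R + ρ / 2) with hlamdef
      have hlam0 : 0 < lam := by positivity
      have hlam1 : lam < 1 := by
        rw [hlamdef, div_lt_one (by positivity)]
        linarith
      have hkey : ∀ v ∈ g^[m] '' Ω, lam⁻¹ • v ∈ K := by
        intro v hv
        have hvK : v ∈ K := interior_subset (hsub hv)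
        have hvR : ‖v‖ ≤ R := mem_closedBall_zero_iff.1 (hRK hvK)
        have hdist : dist (lam⁻¹ • v) v < ρ := by
          rw [dist_eq_norm]
          have hsm : lam⁻¹ • v - v = (lam⁻¹ - 1) • v := by rw [sub_smul, one_smul]
          rw [hsm, norm_smul, Real.norm_eq_abs]
          have hinv : lam⁻¹ = (R + ρ / 2) / R := by rw [hlamdef, inv_div]
          have h1 : lam⁻¹ - 1 = (ρ / 2) / R := by rw [hinv]; field_simp; ring
          rw [h1, abs_of_pos (by positivity)]
          calc (ρ / 2) / R * ‖v‖ ≤ (ρ / 2) / R * R := by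
                apply mul_le_mul_of_nonneg_left hvR (by positivity)
            _ = ρ / 2 := div_mul_cancel₀ _ hR.ne'
            _ < ρ := by linarith
        have hthick : lam⁻¹ • v ∈ thickening ρ (g^[m] '' Ω) :=
          Metric.mem_thickening_iff.2 ⟨v, hv, hdist⟩
        exact interior_subset (hρsub hthick)
      have hstep : ∀ y ∈ K, ∃ z ∈ K, g^[m] y = lam • z := by
        intro y hy
        obtain ⟨i, hi, hxi⟩ := Set.mem_iUnion₂.1 hy
        obtain ⟨w, hw, rfl⟩ := hxi
        have hcomm : g^[m] (g^[i] w) = g^[i] (g^[m] w) := by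
          rw [← Function.iterate_add_apply, ← Function.iterate_add_apply, Nat.add_comm]
        refine ⟨g^[i] (lam⁻¹ • g^[m] w), hgnK i _ (hkey _ ⟨w, hw, rfl⟩), ?_⟩
        rw [hcomm, hih i lam⁻¹ (by positivity) (g^[m] w), smul_inv_smul₀ hlam0.ne']
      have hiter : ∀ (k : ℕ), ∀ x ∈ K, ∃ y ∈ K, g^[k * m] x = lam ^ k • y := by
        intro k
        induction k with
        | zero => intro x hx; exact ⟨x, hx, by simp⟩
        | succ k ih =>
          intro x hx
          obtain ⟨y, hy, hxy⟩ := ih x hx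
          obtain ⟨z, hz, hyz⟩ := hstep y hy
          refine ⟨z, hz, ?_⟩
          have hsp : (k + 1) * m = m + k * m := by ring
          rw [hsp, Function.iterate_add_apply, hxy, hih m _ (by positivity), hyz,
            smul_smul, pow_succ]
      refine ⟨r, hr, ?_⟩
      intro x hx
      have hxK : x ∈ K := interior_subset (hrK hx)
      rw [Metric.tendsto_atTop]
      intro ε hε
      obtain ⟨k, hk⟩ := exists_pow_lt_of_lt_one (div_pos hε hR) hlam1
      have hk' : lam ^ k * R < ε := (lt_div_iff₀ hR).1 hk
      refine ⟨k * m, fun n hn => ?_⟩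
      rw [dist_zero_right]
      obtain ⟨y, hy, hxy⟩ := hiter k x hxK
      have hsp : n = (n - k * m) + k * m := (Nat.sub_add_cancel hn).symm
      rw [hsp, Function.iterate_add_apply, hxy, hih _ _ (by positivity), norm_smul,
        Real.norm_eq_abs, abs_of_pos (by positivity)]
      have hyK : g^[n - k * m] y ∈ K := hgnK _ y hy
      calc lam ^ k * ‖g^[n - k * m] y‖ ≤ lam ^ k * R := by
            apply mul_le_mul_of_nonneg_left (mem_closedBall_zero_iff.1 (hRK hyK)) (by positivity)
        _ < ε := hk'
  tfae_finish
end

section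
/- Let g : ℝ^d → ℝ^d (d ≥ 1) be a continuous, linearly homogeneous map. Suppose there exists δ > 0 such that g^n(x) → 0 as n → ∞ for all x ∈ B_δ(0). Then 0 is an asymptotically stable fixed point of g. -/
open Metric Filter

theorem stmt2 {d : ℕ} (hd : 0 < d)
    (g : EuclideanSpace ℝ (Fin d) → EuclideanSpace ℝ (Fin d))
    (hg : Continuous g)
    (hhom : ∀ α : ℝ, 0 ≤ α → ∀ x : EuclideanSpace ℝ (Fin d), g (α • x) = α • g x)
    (δ : ℝ) (hδ : 0 < δ)
    (hconv : ∀ x ∈ ball (0 : EuclideanSpace ℝ (Fin d)) δ,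
      Tendsto (fun n : ℕ => g^[n] x) atTop (nhds (0 : EuclideanSpace ℝ (Fin d)))) :
    AsympStableAtZero g := by
  have hiter : ∀ (n : ℕ) (α : ℝ), 0 ≤ α → ∀ x, g^[n] (α • x) = α • g^[n] x := by
    intro n
    induction n with
    | zero => intro α hα x; simp
    | succ n ih =>
      intro α hα x
      rw [Function.iterate_succ_apply, Function.iterate_succ_apply, hhom α hα, ih α hα]
  have g0 : ∀ n : ℕ, g^[n] (0 : EuclideanSpace ℝ (Fin d)) = 0 := by
    intro n
    have := hiter n 0 le_rfl 0
    simpa using this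
  have hgc : ∀ n : ℕ, Continuous (g^[n]) := fun n => hg.iterate n
  have hnorm : ∀ (n : ℕ) (x : EuclideanSpace ℝ (Fin d)), x ≠ 0 →
      ‖g^[n] x‖ = ‖x‖ * ‖g^[n] (‖x‖⁻¹ • x)‖ := by
    intro n x hx
    have h1 : (‖x‖ : ℝ) • (‖x‖⁻¹ • x) = x := by
      rw [smul_smul, mul_inv_cancel₀ (norm_ne_zero_iff.mpr hx), one_smul]
    conv_lhs => rw [← h1, hiter n ‖x‖ (norm_nonneg x)]
    rw [norm_smul, Real.norm_eq_abs, abs_of_nonneg (norm_nonneg x)]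
  -- global attraction
  have hglobal : ∀ x, Tendsto (fun n : ℕ => g^[n] x) atTop
      (nhds (0 : EuclideanSpace ℝ (Fin d))) := by
    intro x
    rcases eq_or_ne x 0 with rfl | hx
    · simpa [g0] using (tendsto_const_nhds :
        Tendsto (fun _ : ℕ => (0 : EuclideanSpace ℝ (Fin d))) atTop (nhds 0))
    · have hxn : (0:ℝ) < ‖x‖ := norm_pos_iff.mpr hx
      set α : ℝ := (δ/2) * ‖x‖⁻¹ with hα
      have hα0 : 0 < α := by positivity
      have hmem : α • x ∈ ball (0 : EuclideanSpace ℝ (Fin d)) δ := by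
        rw [mem_ball_zero_iff, norm_smul, Real.norm_eq_abs, abs_of_pos hα0, hα,
          mul_assoc, inv_mul_cancel₀ hxn.ne', mul_one]
        linarith
      have h2 := (hconv _ hmem).const_smul (α⁻¹)
      simp only [smul_zero] at h2
      have h3 : (fun n : ℕ => α⁻¹ • g^[n] (α • x)) = fun n : ℕ => g^[n] x := by
        funext n
        rw [hiter n α hα0.le, smul_smul, inv_mul_cancel₀ hα0.ne', one_smul]
      rwa [h3] at h2
  -- pointwise contraction on the sphere
  have hsph : ∀ y ∈ sphere (0 : EuclideanSpace ℝ (Fin d)) 1,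
      ∃ m : ℕ, ‖g^[m] y‖ < 1/2 := by
    intro y hy
    have hyn : ‖y‖ = 1 := by simpa using hy
    have hmem : (δ/2) • y ∈ ball (0 : EuclideanSpace ℝ (Fin d)) δ := by
      rw [mem_ball_zero_iff, norm_smul, Real.norm_eq_abs, abs_of_pos (by linarith), hyn,
        mul_one]
      linarith
    have hev := (NormedAddCommGroup.tendsto_nhds_zero.mp (hconv _ hmem)) (δ/4) (by linarith)
    obtain ⟨m, hm⟩ := hev.exists
    refine ⟨m, ?_⟩
    rw [hiter m (δ/2) (by linarith) y, norm_smul, Real.norm_eq_abs,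
      abs_of_pos (by linarith : (0:ℝ) < δ/2)] at hm
    nlinarith [norm_nonneg (g^[m] y)]
  -- finite subcover: uniform contraction time N
  have hcov : sphere (0 : EuclideanSpace ℝ (Fin d)) 1 ⊆
      ⋃ m : ℕ, (g^[m]) ⁻¹' (ball (0 : EuclideanSpace ℝ (Fin d)) (1/2)) := by
    intro y hy
    obtain ⟨m, hm⟩ := hsph y hy
    exact Set.mem_iUnion.mpr ⟨m, by simpa [mem_ball_zero_iff] using hm⟩
  obtain ⟨t, ht⟩ := (isCompact_sphere (0 : EuclideanSpace ℝ (Fin d)) 1).elim_finite_subcover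
    (fun m : ℕ => (g^[m]) ⁻¹' (ball (0 : EuclideanSpace ℝ (Fin d)) (1/2)))
    (fun m => (isOpen_ball).preimage (hgc m)) hcov
  set N : ℕ := t.sup id with hN
  have hsph' : ∀ y ∈ sphere (0 : EuclideanSpace ℝ (Fin d)) 1,
      ∃ m : ℕ, 0 < m ∧ m ≤ N ∧ ‖g^[m] y‖ < 1/2 := by
    intro y hy
    obtain ⟨m, hmt, hm⟩ := Set.mem_iUnion₂.mp (ht hy)
    have hyn : ‖y‖ = 1 := by simpa using hy
    rw [Set.mem_preimage, mem_ball_zero_iff] at hm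
    refine ⟨m, ?_, Finset.le_sup (f := id) hmt, hm⟩
    rcases Nat.eq_zero_or_pos m with rfl | h
    · simp [hyn] at hm; linarith
    · exact h
  -- uniform bound C on the first N iterates over the sphere
  have hB : ∀ n : ℕ, ∃ B : ℝ, ∀ y ∈ sphere (0 : EuclideanSpace ℝ (Fin d)) 1,
      ‖g^[n] y‖ ≤ B :=
    fun n => (isCompact_sphere (0 : EuclideanSpace ℝ (Fin d)) 1).exists_bound_of_continuousOn
      (hgc n).continuousOn
  choose B hBspec using hB
  set C : ℝ := max 1 ((Finset.range (N+1)).sup' ⟨0, Finset.mem_range.mpr (Nat.succ_pos N)⟩ B)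
    with hC
  have hC1 : (1:ℝ) ≤ C := le_max_left _ _
  have hC0 : (0:ℝ) < C := lt_of_lt_of_le one_pos hC1
  have hCb : ∀ n : ℕ, n ≤ N → ∀ y ∈ sphere (0 : EuclideanSpace ℝ (Fin d)) 1,
      ‖g^[n] y‖ ≤ C := by
    intro n hn y hy
    refine le_trans (hBspec n y hy) (le_trans ?_ (le_max_right _ _))
    exact Finset.le_sup' B (Finset.mem_range.mpr (Nat.lt_succ_of_le hn))
  -- key uniform bound
  have key : ∀ n : ℕ, ∀ x : EuclideanSpace ℝ (Fin d), ‖g^[n] x‖ ≤ C * ‖x‖ := by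
    intro n
    induction n using Nat.strong_induction_on with
    | _ n ih =>
      intro x
      rcases eq_or_ne x 0 with rfl | hx
      · simp [g0]
      · have hxn : (0:ℝ) < ‖x‖ := norm_pos_iff.mpr hx
        have hy : ‖x‖⁻¹ • x ∈ sphere (0 : EuclideanSpace ℝ (Fin d)) 1 := by
          simp [norm_smul, abs_of_pos (inv_pos.mpr hxn), inv_mul_cancel₀ hxn.ne']
        by_cases hn : n ≤ N
        · rw [hnorm n x hx]
          calc ‖x‖ * ‖g^[n] (‖x‖⁻¹ • x)‖ ≤ ‖x‖ * C :=
                mul_le_mul_of_nonneg_left (hCb n hn _ hy) hxn.le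
            _ = C * ‖x‖ := mul_comm _ _
        · obtain ⟨m, hm0, hmN, hmlt⟩ := hsph' _ hy
          have hmn : m ≤ n := le_trans hmN (le_of_not_ge hn)
          have hsplit : g^[n] x = g^[n - m] (g^[m] x) := by
            rw [← Function.iterate_add_apply, Nat.sub_add_cancel hmn]
          have hmx : ‖g^[m] x‖ ≤ ‖x‖ / 2 := by
            rw [hnorm m x hx]
            nlinarith
          have hih := ih (n - m) (by omega) (g^[m] x)
          rw [hsplit]
          calc ‖g^[n-m] (g^[m] x)‖ ≤ C * ‖g^[m] x‖ := hih
            _ ≤ C * (‖x‖ / 2) := mul_le_mul_of_nonneg_left hmx hC0.le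
            _ ≤ C * ‖x‖ := by nlinarith
  constructor
  · intro ε hε
    refine ⟨ε / C, by positivity, ?_⟩
    intro x hxb i
    rw [mem_ball_zero_iff] at hxb ⊢
    calc ‖g^[i] x‖ ≤ C * ‖x‖ := key i x
      _ < C * (ε / C) := by
          exact mul_lt_mul_of_pos_left hxb hC0
      _ = ε := by field_simp
  · exact ⟨δ, hδ, fun x _ => hglobal x⟩
end

section
/- Let g : ℝ^d → ℝ^d (d ≥ 1) be a continuous, linearly homogeneous map. Suppose there exists δ > 0 such that g^n(x) → 0 as n → ∞ for all x ∈ B_δ(0). Then the convergence g^n(x) → 0 is uniform on B_δ(0); that is, for every ε > 0 there exists N such that ‖g^n(x)‖ < ε for all n ≥ N and all x ∈ B_δ(0). -/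
/-!
By homogeneity, convergence on `B_δ(0)` spreads to all of `ℝ^d`, and every estimate of the form
`‖g^[n] x‖ ≤ c * ‖x‖` only has to be checked on the unit sphere. Since the sphere is compact and the
iterates are continuous, for each `r > 0` there is a single `N` such that every `x` satisfies
`‖g^[m] x‖ ≤ r * ‖x‖` for some `1 ≤ m ≤ N`. For `r = 1`, together with a linear bound
`‖g x‖ ≤ M * ‖x‖`, this makes the iterates uniformly bounded, `‖g^[n] x‖ ≤ C * ‖x‖`; for `r = ε / C`,
writing `g^[n] = g^[n - m] ∘ g^[m]` gives `‖g^[n] x‖ ≤ ε * ‖x‖` for all `n ≥ N`.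
-/

open Metric Filter Function Topology

def PosHomogeneous {E : Type*} [SMul ℝ E] (g : E → E) : Prop :=
  ∀ α : ℝ, 0 ≤ α → ∀ x, g (α • x) = α • g x

theorem iterate_eq_iterate_sub_apply {α : Type*} (f : α → α) {m n : ℕ} (h : m ≤ n) (x : α) :
    f^[n] x = f^[n - m] (f^[m] x) := by
  rw [← iterate_add_apply, Nat.sub_add_cancel h]

section Iterate

variable {E : Type*} [SeminormedAddGroup E] {f : E → E}

theorem norm_iterate_le_pow_mul {M : ℝ} (hM0 : 0 ≤ M) (hM : ∀ x, ‖f x‖ ≤ M * ‖x‖) (n : ℕ)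
    (x : E) : ‖f^[n] x‖ ≤ M ^ n * ‖x‖ := by
  induction n generalizing x with
  | zero => simp
  | succ n ih =>
    calc ‖f^[n + 1] x‖ = ‖f^[n] (f x)‖ := by rw [iterate_succ_apply]
      _ ≤ M ^ n * (M * ‖x‖) := (ih _).trans (mul_le_mul_of_nonneg_left (hM x) (by positivity))
      _ = M ^ (n + 1) * ‖x‖ := by ring

theorem exists_norm_iterate_le_of_forall_exists {M : ℝ} {N : ℕ} (hM : ∀ x, ‖f x‖ ≤ M * ‖x‖)
    (hret : ∀ x, ∃ m ∈ Finset.Icc 1 N, ‖f^[m] x‖ ≤ ‖x‖) :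
    ∃ C > 0, ∀ n x, ‖f^[n] x‖ ≤ C * ‖x‖ := by
  set M' := max M 1
  have hM'1 : 1 ≤ M' := le_max_right M 1
  have hM' : ∀ x, ‖f x‖ ≤ M' * ‖x‖ := fun x =>
    (hM x).trans (mul_le_mul_of_nonneg_right (le_max_left M 1) (norm_nonneg x))
  refine ⟨M' ^ N, pow_pos (zero_lt_one.trans_le hM'1) N, fun n => ?_⟩
  induction n using Nat.strong_induction_on with
  | _ n ih =>
    intro x
    obtain ⟨m, hm, hmx⟩ := hret x
    rw [Finset.mem_Icc] at hm
    rcases le_or_gt m n with hmn | hnm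
    · calc ‖f^[n] x‖ = ‖f^[n - m] (f^[m] x)‖ := by rw [iterate_eq_iterate_sub_apply f hmn]
        _ ≤ M' ^ N * ‖f^[m] x‖ := ih _ (by omega) _
        _ ≤ M' ^ N * ‖x‖ := mul_le_mul_of_nonneg_left hmx (by positivity)
    · calc ‖f^[n] x‖ ≤ M' ^ n * ‖x‖ := norm_iterate_le_pow_mul (by positivity) hM' n x
        _ ≤ M' ^ N * ‖x‖ :=
          mul_le_mul_of_nonneg_right (pow_le_pow_right₀ hM'1 (by omega)) (norm_nonneg x)

theorem norm_iterate_le_of_forall_exists {C r : ℝ} {N : ℕ} (hC : 0 ≤ C)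
    (hbdd : ∀ n x, ‖f^[n] x‖ ≤ C * ‖x‖)
    (hhit : ∀ x, ∃ m ∈ Finset.Icc 1 N, ‖f^[m] x‖ ≤ r * ‖x‖) {n : ℕ} (hn : N ≤ n) (x : E) :
    ‖f^[n] x‖ ≤ C * r * ‖x‖ := by
  obtain ⟨m, hm, hmx⟩ := hhit x
  calc ‖f^[n] x‖ = ‖f^[n - m] (f^[m] x)‖ := by
        rw [iterate_eq_iterate_sub_apply f ((Finset.mem_Icc.mp hm).2.trans hn)]
    _ ≤ C * ‖f^[m] x‖ := hbdd _ _
    _ ≤ C * (r * ‖x‖) := mul_le_mul_of_nonneg_left hmx hC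
    _ = C * r * ‖x‖ := by ring

end Iterate

namespace PosHomogeneous

variable {E : Type*} [NormedAddCommGroup E] [NormedSpace ℝ E] {g : E → E}

theorem map_zero (hg : PosHomogeneous g) : g 0 = 0 := by
  simpa using hg 0 le_rfl 0

theorem iterate (hg : PosHomogeneous g) (n : ℕ) : PosHomogeneous g^[n] :=
  fun α hα => Commute.iterate_left (f := g) (g := (α • ·)) (hg α hα) n

theorem norm_apply_eq (hg : PosHomogeneous g) (x : E) : ‖g x‖ = ‖x‖ * ‖g (‖x‖⁻¹ • x)‖ := by
  rcases eq_or_ne x 0 with rfl | hx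
  · simp [hg.map_zero]
  · conv_lhs => rw [← smul_inv_smul₀ (norm_ne_zero_iff.mpr hx) x, hg _ (norm_nonneg x)]
    rw [norm_smul, norm_norm]

theorem tendsto_iterate_of_forall_mem_ball (hg : PosHomogeneous g) {δ : ℝ} (hδ : 0 < δ)
    (hconv : ∀ x ∈ ball (0 : E) δ, Tendsto (fun n => g^[n] x) atTop (𝓝 0)) (x : E) :
    Tendsto (fun n => g^[n] x) atTop (𝓝 0) := by
  set c := δ / (‖x‖ + 1)
  have hc : 0 < c := by positivity
  have hcx : c • x ∈ ball (0 : E) δ := by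
    rw [mem_ball_zero_iff, norm_smul, Real.norm_of_nonneg hc.le, div_mul_eq_mul_div,
      div_lt_iff₀ (by positivity)]
    nlinarith
  simpa [(hg.iterate _) c hc.le, inv_smul_smul₀ hc.ne'] using (hconv _ hcx).const_smul c⁻¹

variable [ProperSpace E]

theorem exists_norm_le_mul_norm (hg : PosHomogeneous g) (hc : Continuous g) :
    ∃ M, ∀ x, ‖g x‖ ≤ M * ‖x‖ := by
  obtain ⟨M, hM⟩ := (isCompact_sphere (0 : E) 1).exists_bound_of_continuousOn hc.continuousOn
  refine ⟨M, fun x => ?_⟩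
  rw [hg.norm_apply_eq, mul_comm]
  rcases eq_or_ne x 0 with rfl | hx
  · simp
  · exact mul_le_mul_of_nonneg_right
      (hM _ (mem_sphere_zero_iff_norm.mpr (norm_smul_inv_norm (𝕜 := ℝ) hx))) (norm_nonneg x)

theorem exists_forall_exists_norm_iterate_le (hg : PosHomogeneous g) (hc : Continuous g)
    (hconv : ∀ x, Tendsto (fun n => g^[n] x) atTop (𝓝 0)) {r : ℝ} (hr : 0 < r) :
    ∃ N, ∀ x, ∃ m ∈ Finset.Icc 1 N, ‖g^[m] x‖ ≤ r * ‖x‖ := by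
  have hcover : sphere (0 : E) 1 ⊆ ⋃ n : ℕ, {y | ‖g^[n + 1] y‖ < r} := by
    intro x _
    have h := tendsto_zero_iff_norm_tendsto_zero.mp ((hconv x).comp (tendsto_add_atTop_nat 1))
    obtain ⟨n, hn⟩ := (h.eventually (gt_mem_nhds hr)).exists
    exact Set.mem_iUnion.mpr ⟨n, hn⟩
  obtain ⟨t, ht⟩ := (isCompact_sphere (0 : E) 1).elim_finite_subcover _
    (fun n => isOpen_lt (hc.iterate _).norm continuous_const) hcover
  refine ⟨t.sup id + 1, fun x => ?_⟩
  rcases eq_or_ne x 0 with rfl | hx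
  · exact ⟨1, by simp, by simp [hg.map_zero]⟩
  · obtain ⟨n, hnt, hn⟩ :=
      Set.mem_iUnion₂.mp (ht (mem_sphere_zero_iff_norm.mpr (norm_smul_inv_norm (𝕜 := ℝ) hx)))
    refine ⟨n + 1, Finset.mem_Icc.mpr ⟨by omega, by simpa using Finset.le_sup (f := id) hnt⟩, ?_⟩
    rw [(hg.iterate _).norm_apply_eq, mul_comm]
    exact mul_le_mul_of_nonneg_right hn.le (norm_nonneg x)

theorem exists_norm_iterate_le (hg : PosHomogeneous g) (hc : Continuous g)
    (hconv : ∀ x, Tendsto (fun n => g^[n] x) atTop (𝓝 0)) {r : ℝ} (hr : 0 < r) :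
    ∃ N, ∀ n ≥ N, ∀ x, ‖g^[n] x‖ ≤ r * ‖x‖ := by
  obtain ⟨M, hM⟩ := hg.exists_norm_le_mul_norm hc
  obtain ⟨N₁, hret⟩ := hg.exists_forall_exists_norm_iterate_le hc hconv one_pos
  obtain ⟨C, hC, hbdd⟩ := exists_norm_iterate_le_of_forall_exists hM (by simpa using hret)
  obtain ⟨N, hhit⟩ := hg.exists_forall_exists_norm_iterate_le hc hconv (div_pos hr hC)
  refine ⟨N, fun n hn x => ?_⟩
  simpa [mul_div_cancel₀ r hC.ne'] using norm_iterate_le_of_forall_exists hC.le hbdd hhit hn x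

end PosHomogeneous

theorem stmt3_general {d : ℕ}
    (g : EuclideanSpace ℝ (Fin d) → EuclideanSpace ℝ (Fin d))
    (hg : Continuous g)
    (hhom : ∀ α : ℝ, 0 ≤ α → ∀ x : EuclideanSpace ℝ (Fin d), g (α • x) = α • g x)
    (δ : ℝ) (hδ : 0 < δ)
    (hconv : ∀ x ∈ ball (0 : EuclideanSpace ℝ (Fin d)) δ,
      Tendsto (fun n : ℕ => g^[n] x) atTop (nhds (0 : EuclideanSpace ℝ (Fin d)))) :
    ∀ ε > (0 : ℝ), ∃ N : ℕ, ∀ n ≥ N, ∀ x ∈ ball (0 : EuclideanSpace ℝ (Fin d)) δ,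
      ‖g^[n] x‖ < ε := by
  intro ε hε
  obtain ⟨N, hN⟩ := PosHomogeneous.exists_norm_iterate_le hhom hg
    (PosHomogeneous.tendsto_iterate_of_forall_mem_ball hhom hδ hconv) (div_pos hε hδ)
  refine ⟨N, fun n hn x hx => ?_⟩
  calc ‖g^[n] x‖ ≤ ε / δ * ‖x‖ := hN n hn x
    _ < ε / δ * δ := mul_lt_mul_of_pos_left (mem_ball_zero_iff.mp hx) (div_pos hε hδ)
    _ = ε := div_mul_cancel₀ ε hδ.ne'

theorem stmt3 {d : ℕ} (hd : 0 < d)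
    (g : EuclideanSpace ℝ (Fin d) → EuclideanSpace ℝ (Fin d))
    (hg : Continuous g)
    (hhom : ∀ α : ℝ, 0 ≤ α → ∀ x : EuclideanSpace ℝ (Fin d), g (α • x) = α • g x)
    (δ : ℝ) (hδ : 0 < δ)
    (hconv : ∀ x ∈ ball (0 : EuclideanSpace ℝ (Fin d)) δ,
      Tendsto (fun n : ℕ => g^[n] x) atTop (nhds (0 : EuclideanSpace ℝ (Fin d)))) :
    ∀ ε > (0 : ℝ), ∃ N : ℕ, ∀ n ≥ N, ∀ x ∈ ball (0 : EuclideanSpace ℝ (Fin d)) δ,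
      ‖g^[n] x‖ < ε :=
  stmt3_general g hg hhom δ hδ hconv
end

section
/- Let F : ℝ × ℝ^d → ℝ^d (d ≥ 1) be continuous and write f_μ = F(μ, ·), so each f_μ is a continuous map on ℝ^d and the family depends continuously on the parameter μ. Suppose 0 is an asymptotically stable fixed point of f_0, and let Ω ⊂ ℝ^d be a compact set contained in the basin of attraction of 0 under f_0 (i.e., f_0^n(x) → 0 as n → ∞ for every x ∈ Ω). Then for all ε > 0 there exist δ > 0 and N ∈ ℕ such that f_μ^n(x) ∈ B_ε(0) for all x ∈ Ω, all n ≥ N, and all μ ∈ (−δ, δ). -/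
open Metric Filter

/-- Parametrized iterate as a function of the pair `(μ, x)`. -/
private def itF {d : ℕ} (F : ℝ × EuclideanSpace ℝ (Fin d) → EuclideanSpace ℝ (Fin d)) :
    ℕ → ℝ × EuclideanSpace ℝ (Fin d) → EuclideanSpace ℝ (Fin d)
  | 0 => fun p => p.2
  | i + 1 => fun p => F (p.1, itF F i p)

private lemma itF_eq {d : ℕ} (F : ℝ × EuclideanSpace ℝ (Fin d) → EuclideanSpace ℝ (Fin d))
    (i : ℕ) (μ : ℝ) (x : EuclideanSpace ℝ (Fin d)) :
    itF F i (μ, x) = (fun y => F (μ, y))^[i] x := by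
  induction i with
  | zero => rfl
  | succ i ih =>
    rw [Function.iterate_succ_apply']
    simp only [itF, ih]

private lemma itF_continuous {d : ℕ}
    (F : ℝ × EuclideanSpace ℝ (Fin d) → EuclideanSpace ℝ (Fin d)) (hF : Continuous F)
    (i : ℕ) : Continuous (itF F i) := by
  induction i with
  | zero => exact continuous_snd
  | succ i ih => exact hF.comp (continuous_fst.prodMk ih)

/-- Uniform attraction on a compact subset of the basin, given Lyapunov stability. -/
private lemma unifAttr {d : ℕ} {f : EuclideanSpace ℝ (Fin d) → EuclideanSpace ℝ (Fin d)}
    (hf : Continuous f)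
    (hst : ∀ ε > (0 : ℝ), ∃ δ > (0 : ℝ), ∀ x ∈ ball (0 : EuclideanSpace ℝ (Fin d)) δ,
      ∀ i : ℕ, f^[i] x ∈ ball (0 : EuclideanSpace ℝ (Fin d)) ε)
    {K : Set (EuclideanSpace ℝ (Fin d))} (hK : IsCompact K)
    (hb : ∀ x ∈ K, Tendsto (fun n : ℕ => f^[n] x) atTop
      (nhds (0 : EuclideanSpace ℝ (Fin d))))
    {ρ : ℝ} (hρ : 0 < ρ) :
    ∃ N : ℕ, ∀ x ∈ K, ∀ n ≥ N, f^[n] x ∈ ball (0 : EuclideanSpace ℝ (Fin d)) ρ := by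
  obtain ⟨σ, hσ, hσ'⟩ := hst ρ hρ
  have hex : ∀ x : K, ∃ n : ℕ, f^[n] (x : EuclideanSpace ℝ (Fin d)) ∈
      ball (0 : EuclideanSpace ℝ (Fin d)) σ := fun x =>
    ((hb x x.2).eventually (ball_mem_nhds _ hσ)).exists
  choose nn hnn using hex
  have hcover : K ⊆ ⋃ x : K, (f^[nn x]) ⁻¹' ball (0 : EuclideanSpace ℝ (Fin d)) σ := by
    intro x hx
    exact Set.mem_iUnion.2 ⟨⟨x, hx⟩, hnn ⟨x, hx⟩⟩
  obtain ⟨t, ht⟩ := hK.elim_finite_subcover _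
    (fun x : K => (isOpen_ball).preimage (hf.iterate (nn x))) hcover
  refine ⟨t.sup nn, fun x hx n hn => ?_⟩
  obtain ⟨i, hit, hxi⟩ := Set.mem_iUnion₂.1 (ht hx)
  have hni : nn i ≤ n := le_trans (Finset.le_sup hit) hn
  have : f^[n] x = f^[n - nn i] (f^[nn i] x) := by
    rw [← Function.iterate_add_apply]
    congr 1
    omega
  rw [this]
  exact hσ' _ hxi _

theorem stmt4 {d : ℕ} (hd : 0 < d)
    (F : ℝ × EuclideanSpace ℝ (Fin d) → EuclideanSpace ℝ (Fin d))
    (hF : Continuous F)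
    (hfix : F (0, 0) = 0)
    (hstab : AsympStableAtZero (fun x => F (0, x)))
    (Ω : Set (EuclideanSpace ℝ (Fin d))) (hΩ : IsCompact Ω)
    (hbasin : ∀ x ∈ Ω, Tendsto (fun n : ℕ => (fun y => F (0, y))^[n] x) atTop
      (nhds (0 : EuclideanSpace ℝ (Fin d)))) :
    ∀ ε > (0 : ℝ), ∃ δ > (0 : ℝ), ∃ N : ℕ, ∀ x ∈ Ω, ∀ n ≥ N, ∀ μ : ℝ, |μ| < δ →
      (fun y => F (μ, y))^[n] x ∈ ball (0 : EuclideanSpace ℝ (Fin d)) ε := by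
  intro ε hε
  set f₀ : EuclideanSpace ℝ (Fin d) → EuclideanSpace ℝ (Fin d) := fun y => F (0, y) with hf₀def
  have hf₀ : Continuous f₀ := by
    show Continuous fun y => F (0, y)
    fun_prop
  obtain ⟨hLyap, δa, hδa, hattr⟩ := hstab
  set ε' : ℝ := min ε δa with hε'def
  have hε' : 0 < ε' := lt_min hε hδa
  obtain ⟨r₀, hr₀, hstb⟩ := hLyap ε' hε'
  set r : ℝ := min r₀ ε' with hrdef
  have hr : 0 < r := lt_min hr₀ hε'
  -- orbits of f₀ starting in ball r stay in ball ε'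
  have hballr : ∀ y ∈ ball (0 : EuclideanSpace ℝ (Fin d)) r, ∀ i : ℕ, f₀^[i] y ∈ ball (0 : EuclideanSpace ℝ (Fin d)) ε' := by
    intro y hy i
    exact hstb y (ball_subset_ball (min_le_left _ _) hy) i
  have hKcb : IsCompact (closedBall (0 : EuclideanSpace ℝ (Fin d)) (r / 2)) := isCompact_closedBall _ _
  have hcb_ball : closedBall (0 : EuclideanSpace ℝ (Fin d)) (r / 2) ⊆ ball (0 : EuclideanSpace ℝ (Fin d)) r :=
    closedBall_subset_ball (by linarith)
  have hbasinK : ∀ y ∈ closedBall (0 : EuclideanSpace ℝ (Fin d)) (r / 2),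
      Tendsto (fun n : ℕ => f₀^[n] y) atTop (nhds (0 : EuclideanSpace ℝ (Fin d))) := by
    intro y hy
    refine hattr y ?_
    have : r ≤ δa := le_trans (min_le_right _ _) (min_le_right _ _)
    exact ball_subset_ball this (hcb_ball hy)
  obtain ⟨m₀, hm₀⟩ := unifAttr hf₀ hLyap hKcb hbasinK (half_pos hr)
  set m : ℕ := max m₀ 1 with hmdef
  have hm1 : 1 ≤ m := le_max_right _ _
  have hmK : ∀ y ∈ closedBall (0 : EuclideanSpace ℝ (Fin d)) (r / 2), f₀^[m] y ∈ ball (0 : EuclideanSpace ℝ (Fin d)) (r / 2) :=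
    fun y hy => hm₀ y hy m (le_max_left _ _)
  -- Tube 1: near μ = 0, the first m iterates starting in closedBall (r/2) stay in ball ε,
  -- and the m-th iterate lands back in ball (r/2).
  set S₁ : Set (ℝ × EuclideanSpace ℝ (Fin d)) :=
    (⋂ i : Fin (m + 1), itF F i ⁻¹' ball (0 : EuclideanSpace ℝ (Fin d)) ε) ∩ itF F m ⁻¹' ball (0 : EuclideanSpace ℝ (Fin d)) (r / 2)
      with hS₁def
  have hS₁open : IsOpen S₁ := by
    refine IsOpen.inter (isOpen_iInter_of_finite fun i => ?_) ?_
    · exact isOpen_ball.preimage (itF_continuous F hF i)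
    · exact isOpen_ball.preimage (itF_continuous F hF m)
  have hS₁sub : ({(0 : ℝ)} : Set ℝ) ×ˢ closedBall (0 : EuclideanSpace ℝ (Fin d)) (r / 2) ⊆ S₁ := by
    rintro ⟨μ, y⟩ ⟨hμ, hy⟩
    simp only [Set.mem_singleton_iff] at hμ
    subst hμ
    constructor
    · refine Set.mem_iInter.2 fun i => ?_
      show itF F i (0, y) ∈ ball (0 : EuclideanSpace ℝ (Fin d)) ε
      rw [itF_eq]
      exact ball_subset_ball (min_le_left _ _) (hballr y (hcb_ball hy) i)
    · show itF F m (0, y) ∈ ball (0 : EuclideanSpace ℝ (Fin d)) (r / 2)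
      rw [itF_eq]
      exact hmK y hy
  obtain ⟨u₁, v₁, hu₁, _, h0u₁, hKv₁, huv₁⟩ :=
    generalized_tube_lemma isCompact_singleton hKcb hS₁open hS₁sub
  obtain ⟨δ₁, hδ₁, hδ₁u⟩ := Metric.isOpen_iff.1 hu₁ 0 (h0u₁ rfl)
  -- Tube 2: near μ = 0, the N-th iterate sends Ω into ball (r/2).
  obtain ⟨N, hN⟩ := unifAttr hf₀ hLyap hΩ hbasin (half_pos hr)
  set S₂ : Set (ℝ × EuclideanSpace ℝ (Fin d)) := itF F N ⁻¹' ball (0 : EuclideanSpace ℝ (Fin d)) (r / 2) with hS₂def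
  have hS₂open : IsOpen S₂ := isOpen_ball.preimage (itF_continuous F hF N)
  have hS₂sub : ({(0 : ℝ)} : Set ℝ) ×ˢ Ω ⊆ S₂ := by
    rintro ⟨μ, y⟩ ⟨hμ, hy⟩
    simp only [Set.mem_singleton_iff] at hμ
    subst hμ
    show itF F N (0, y) ∈ ball (0 : EuclideanSpace ℝ (Fin d)) (r / 2)
    rw [itF_eq]
    exact hN y hy N le_rfl
  obtain ⟨u₂, v₂, hu₂, _, h0u₂, hΩv₂, huv₂⟩ :=
    generalized_tube_lemma isCompact_singleton hΩ hS₂open hS₂sub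
  obtain ⟨δ₂, hδ₂, hδ₂u⟩ := Metric.isOpen_iff.1 hu₂ 0 (h0u₂ rfl)
  refine ⟨min δ₁ δ₂, lt_min hδ₁ hδ₂, N, fun x hx n hn μ hμ => ?_⟩
  have hμball : μ ∈ ball (0 : ℝ) (min δ₁ δ₂) := by
    simpa [Real.dist_eq] using hμ
  have hμ1 : μ ∈ u₁ := hδ₁u (ball_subset_ball (min_le_left _ _) hμball)
  have hμ2 : μ ∈ u₂ := hδ₂u (ball_subset_ball (min_le_right _ _) hμball)
  set g : EuclideanSpace ℝ (Fin d) → EuclideanSpace ℝ (Fin d) := fun y => F (μ, y) with hgdef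
  -- the N-th iterate lands in closedBall (r/2)
  have hy0 : g^[N] x ∈ closedBall (0 : EuclideanSpace ℝ (Fin d)) (r / 2) := by
    have : (μ, x) ∈ S₂ := huv₂ ⟨hμ2, hΩv₂ hx⟩
    have h := this
    simp only [hS₂def, Set.mem_preimage] at h
    rw [itF_eq] at h
    exact ball_subset_closedBall h
  -- key consequence of tube 1
  have Hmu : ∀ z ∈ closedBall (0 : EuclideanSpace ℝ (Fin d)) (r / 2),
      (∀ i ≤ m, g^[i] z ∈ ball (0 : EuclideanSpace ℝ (Fin d)) ε) ∧ g^[m] z ∈ ball (0 : EuclideanSpace ℝ (Fin d)) (r / 2) := by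
    intro z hz
    have hmem : (μ, z) ∈ S₁ := huv₁ ⟨hμ1, hKv₁ hz⟩
    obtain ⟨h1, h2⟩ := hmem
    constructor
    · intro i hi
      have := Set.mem_iInter.1 h1 ⟨i, Nat.lt_succ_of_le hi⟩
      simp only [Set.mem_preimage] at this
      rwa [itF_eq] at this
    · simp only [Set.mem_preimage] at h2
      rwa [itF_eq] at h2
  -- invariance of closedBall (r/2) under g^[m*q]
  have inv : ∀ q : ℕ, ∀ z ∈ closedBall (0 : EuclideanSpace ℝ (Fin d)) (r / 2),
      g^[m * q] z ∈ closedBall (0 : EuclideanSpace ℝ (Fin d)) (r / 2) := by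
    intro q
    induction q with
    | zero => intro z hz; simpa using hz
    | succ q ih =>
      intro z hz
      have : g^[m * (q + 1)] z = g^[m * q] (g^[m] z) := by
        rw [show m * (q + 1) = m * q + m from by ring, Function.iterate_add_apply]
      rw [this]
      exact ih _ (ball_subset_closedBall ((Hmu z hz).2))
  -- decompose n = (n - N) + N and n - N = (n-N) % m + m * ((n-N)/m)
  have hdecomp : g^[n] x = g^[(n - N) % m] (g^[m * ((n - N) / m)] (g^[N] x)) := by
    rw [← Function.iterate_add_apply, ← Function.iterate_add_apply]
    congr 1
    have := Nat.mod_add_div (n - N) m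
    omega
  show g^[n] x ∈ ball (0 : EuclideanSpace ℝ (Fin d)) ε
  rw [hdecomp]
  have hmid : g^[m * ((n - N) / m)] (g^[N] x) ∈ closedBall (0 : EuclideanSpace ℝ (Fin d)) (r / 2) :=
    inv _ _ hy0
  exact (Hmu _ hmid).1 _ (le_of_lt (Nat.mod_lt _ (by omega)))
end

section
/- Let f_L, f_R : ℝ^d → ℝ^d (d ≥ 1) be C^1 maps that agree on the switching manifold Σ = {x ∈ ℝ^d : x_1 = 0}, and define f : ℝ^d → ℝ^d by f(x) = f_L(x) if x_1 ≤ 0 and f(x) = f_R(x) if x_1 ≥ 0. For x, v ∈ ℝ^d define C(x,v) = Df_L(x) if x_1 < 0, or if x_1 = 0 and v_1 < 0; and C(x,v) = Df_R(x) if x_1 > 0, or if x_1 = 0 and v_1 ≥ 0. Define h : ℝ^d × ℝ^d → ℝ^d × ℝ^d by h(x,v) = (f(x), C(x,v)v), and for n ≥ 1 define C_n(x,v) = C(h^{n−1}(x,v)) C(h^{n−2}(x,v)) ⋯ C(x,v). Then for every x ∈ ℝ^d, v ∈ ℝ^d, and n ≥ 1, f^n(x + δv) − f^n(x) = δ C_n(x,v)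 v + o(δ) as δ → 0^+; that is, lim_{δ → 0^+} ‖f^n(x + δv) − f^n(x) − δ C_n(x,v) v‖ / δ = 0. -/
/-!
For a curve `γ` with right derivative `w` at `0`, the curve `f ∘ γ` has right derivative
`C(γ 0, w) w`. If `γ 0 ∉ Σ`, or `γ 0 ∈ Σ` and `w₁ ≠ 0`, then `γ` eventually stays in one closed
half-space, where `f` is a single `C¹` branch. If `γ 0 ∈ Σ` and `w₁ = 0`, the two branches agree
along the line through `γ 0` in direction `w`, so their derivatives agree on `w`, and `f ∘ γ`
has that derivative on each of the two sets of times where `γ` lies on one side of `Σ`.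
Induction along the orbit of `h` then shows that `δ ↦ f^[n] (x + δ • v)` has right derivative
`C_n(x, v) v` at `0`.
-/

open Metric Filter

/-- The one-sided Jacobian `C(x,v)`: `DfL x` if `x₁ < 0`, or `x₁ = 0` and `v₁ < 0`;
`DfR x` if `x₁ > 0`, or `x₁ = 0` and `v₁ ≥ 0`. -/
noncomputable def Cmat {d : ℕ} (hd : 0 < d)
    (fL fR : EuclideanSpace ℝ (Fin d) → EuclideanSpace ℝ (Fin d))
    (x v : EuclideanSpace ℝ (Fin d)) :
    EuclideanSpace ℝ (Fin d) →L[ℝ] EuclideanSpace ℝ (Fin d) :=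
  if x ⟨0, hd⟩ < 0 ∨ (x ⟨0, hd⟩ = 0 ∧ v ⟨0, hd⟩ < 0) then fderiv ℝ fL x else fderiv ℝ fR x

/-- The tangent-bundle map `h(x,v) = (f(x), C(x,v) v)`. -/
noncomputable def hMap {d : ℕ} (hd : 0 < d)
    (fL fR f : EuclideanSpace ℝ (Fin d) → EuclideanSpace ℝ (Fin d))
    (p : EuclideanSpace ℝ (Fin d) × EuclideanSpace ℝ (Fin d)) :
    EuclideanSpace ℝ (Fin d) × EuclideanSpace ℝ (Fin d) :=
  (f p.1, Cmat hd fL fR p.1 p.2 p.2)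

/-- The cocycle `C_n(x,v) = C(h^{n-1}(x,v)) ⋯ C(x,v)`, with `C_0 = I`. -/
noncomputable def Cn {d : ℕ} (hd : 0 < d)
    (fL fR f : EuclideanSpace ℝ (Fin d) → EuclideanSpace ℝ (Fin d)) :
    ℕ → EuclideanSpace ℝ (Fin d) × EuclideanSpace ℝ (Fin d) →
      (EuclideanSpace ℝ (Fin d) →L[ℝ] EuclideanSpace ℝ (Fin d))
  | 0, _ => ContinuousLinearMap.id ℝ (EuclideanSpace ℝ (Fin d))
  | n + 1, p =>
      (Cmat hd fL fR ((hMap hd fL fR f)^[n] p).1 ((hMap hd fL fR f)^[n] p).2).comp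
        (Cn hd fL fR f n p)

open Set Topology

theorem eventually_neg_of_hasDerivWithinAt_Ioi {φ : ℝ → ℝ} {a : ℝ}
    (hφ : HasDerivWithinAt φ a (Ioi 0) 0) (h : φ 0 < 0 ∨ (φ 0 = 0 ∧ a < 0)) :
    ∀ᶠ δ in 𝓝[>] 0, φ δ < 0 := by
  rcases h with h0 | ⟨h0, ha⟩
  · exact hφ.continuousWithinAt.eventually_lt_const h0
  · have hslope : ∀ᶠ δ in 𝓝[>] 0, slope φ 0 δ < 0 :=
      ((hasDerivWithinAt_iff_tendsto_slope' (lt_irrefl 0)).1 hφ).eventually_lt_const ha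
    filter_upwards [hslope, self_mem_nhdsWithin] with δ hδ (hδpos : 0 < δ)
    rw [slope_def_field, h0, sub_zero, sub_zero] at hδ
    exact neg_of_div_neg_left hδ hδpos.le

theorem eventually_pos_of_hasDerivWithinAt_Ioi {φ : ℝ → ℝ} {a : ℝ}
    (hφ : HasDerivWithinAt φ a (Ioi 0) 0) (h : 0 < φ 0 ∨ (φ 0 = 0 ∧ 0 < a)) :
    ∀ᶠ δ in 𝓝[>] 0, 0 < φ δ := by
  simpa using eventually_neg_of_hasDerivWithinAt_Ioi hφ.neg (by simpa using h)

theorem HasFDerivAt.apply_eq_of_eqOn_line {E F : Type*} [NormedAddCommGroup E] [NormedSpace ℝ E]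
    [NormedAddCommGroup F] [NormedSpace ℝ F] {g₁ g₂ : E → F} {L₁ L₂ : E →L[ℝ] F} {x w : E}
    (h₁ : HasFDerivAt g₁ L₁ x) (h₂ : HasFDerivAt g₂ L₂ x)
    (h : ∀ t : ℝ, g₁ (x + t • w) = g₂ (x + t • w)) : L₁ w = L₂ w := by
  have h₁' := h₁.hasLineDerivAt w
  unfold HasLineDerivAt at h₁'
  simp only [h] at h₁'
  exact h₁'.unique (h₂.hasLineDerivAt w)

section PiecewiseMap

variable {d : ℕ} (hd : 0 < d) {fL fR f : EuclideanSpace ℝ (Fin d) → EuclideanSpace ℝ (Fin d)}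

theorem hasDerivWithinAt_comp_of_piecewise (hfL : Differentiable ℝ fL)
    (hfR : Differentiable ℝ fR)
    (hagree : ∀ x : EuclideanSpace ℝ (Fin d), x ⟨0, hd⟩ = 0 → fL x = fR x)
    (hfdef : ∀ x : EuclideanSpace ℝ (Fin d),
      (x ⟨0, hd⟩ ≤ 0 → f x = fL x) ∧ (0 ≤ x ⟨0, hd⟩ → f x = fR x))
    {γ : ℝ → EuclideanSpace ℝ (Fin d)} {w : EuclideanSpace ℝ (Fin d)}
    (hγ : HasDerivWithinAt γ w (Ioi 0) 0) :
    HasDerivWithinAt (f ∘ γ) (Cmat hd fL fR (γ 0) w w) (Ioi 0) 0 := by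
  set i : Fin d := ⟨0, hd⟩
  set x := γ 0
  have hγi : HasDerivWithinAt (fun δ => γ δ i) (w i) (Ioi 0) 0 :=
    (EuclideanSpace.proj (𝕜 := ℝ) i).hasFDerivAt.comp_hasDerivWithinAt 0 hγ
  have hL : HasDerivWithinAt (fL ∘ γ) (fderiv ℝ fL x w) (Ioi 0) 0 :=
    (hfL x).hasFDerivAt.comp_hasDerivWithinAt 0 hγ
  have hR : HasDerivWithinAt (fR ∘ γ) (fderiv ℝ fR x w) (Ioi 0) 0 :=
    (hfR x).hasFDerivAt.comp_hasDerivWithinAt 0 hγ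
  by_cases hC : x i < 0 ∨ (x i = 0 ∧ w i < 0)
  · rw [Cmat, if_pos hC]
    refine hL.congr_of_eventuallyEq ?_ ((hfdef x).1 ?_)
    · filter_upwards [eventually_neg_of_hasDerivWithinAt_Ioi hγi hC] with δ hδ
      exact (hfdef _).1 hδ.le
    · rcases hC with h | h
      exacts [h.le, h.1.le]
  rw [Cmat, if_neg hC]
  by_cases hT : x i = 0 ∧ w i = 0
  · obtain ⟨hx, hw⟩ := hT
    have hline : ∀ t : ℝ, fL (x + t • w) = fR (x + t • w) := fun t => hagree _ (by simp [hx, hw])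
    have hDw : fderiv ℝ fL x w = fderiv ℝ fR x w :=
      (hfL x).hasFDerivAt.apply_eq_of_eqOn_line (hfR x).hasFDerivAt hline
    have hleft : HasDerivWithinAt (f ∘ γ) (fderiv ℝ fR x w) {δ ∈ Ioi 0 | γ δ i ≤ 0} 0 :=
      (hDw ▸ hL.mono (sep_subset _ _)).congr (fun δ hδ => (hfdef _).1 hδ.2) ((hfdef x).1 hx.le)
    have hright : HasDerivWithinAt (f ∘ γ) (fderiv ℝ fR x w) {δ ∈ Ioi 0 | 0 ≤ γ δ i} 0 :=
      (hR.mono (sep_subset _ _)).congr (fun δ hδ => (hfdef _).2 hδ.2) ((hfdef x).2 hx.ge)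
    have hcover : {δ ∈ Ioi 0 | γ δ i ≤ 0} ∪ {δ ∈ Ioi 0 | 0 ≤ γ δ i} = Ioi (0 : ℝ) := by
      rw [← sep_or]
      exact sep_eq_self_iff_mem_true.2 fun δ _ => le_total _ _
    exact hcover ▸ hleft.union hright
  have hRside : 0 < x i ∨ (x i = 0 ∧ 0 < w i) := by
    push Not at hC hT
    rcases hC.1.eq_or_lt with hx | hx
    exacts [Or.inr ⟨hx.symm, (hC.2 hx.symm).lt_of_ne (hT hx.symm).symm⟩, Or.inl hx]
  refine hR.congr_of_eventuallyEq ?_ ((hfdef x).2 ?_)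
  · filter_upwards [eventually_pos_of_hasDerivWithinAt_Ioi hγi hRside] with δ hδ
    exact (hfdef _).2 hδ.le
  · rcases hRside with h | h
    exacts [h.le, h.1.ge]

theorem hMap_iterate (n : ℕ) (p : EuclideanSpace ℝ (Fin d) × EuclideanSpace ℝ (Fin d)) :
    (hMap hd fL fR f)^[n] p = (f^[n] p.1, Cn hd fL fR f n p p.2) := by
  induction n with
  | zero => rfl
  | succ n ih =>
    rw [Function.iterate_succ_apply', ih, Function.iterate_succ_apply']
    simp only [hMap, Cn, ih, ContinuousLinearMap.comp_apply]

theorem hasDerivWithinAt_iterate_add_smul (hfL : Differentiable ℝ fL)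
    (hfR : Differentiable ℝ fR)
    (hagree : ∀ x : EuclideanSpace ℝ (Fin d), x ⟨0, hd⟩ = 0 → fL x = fR x)
    (hfdef : ∀ x : EuclideanSpace ℝ (Fin d),
      (x ⟨0, hd⟩ ≤ 0 → f x = fL x) ∧ (0 ≤ x ⟨0, hd⟩ → f x = fR x))
    (x v : EuclideanSpace ℝ (Fin d)) (n : ℕ) :
    HasDerivWithinAt (fun δ : ℝ => f^[n] (x + δ • v)) (Cn hd fL fR f n (x, v) v) (Ioi 0) 0 := by
  induction n with
  | zero =>
    simpa [Cn] using (((hasDerivAt_id (0 : ℝ)).smul_const v).const_add x).hasDerivWithinAt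
  | succ n ih =>
    have h := hasDerivWithinAt_comp_of_piecewise hd hfL hfR hagree hfdef ih
    simp only [Function.iterate_succ_apply']
    simpa [Function.comp_def, Cn, hMap_iterate] using h

end PiecewiseMap

theorem stmt6_general {d : ℕ} (hd : 0 < d)
    (fL fR f : EuclideanSpace ℝ (Fin d) → EuclideanSpace ℝ (Fin d))
    (hfL : ContDiff ℝ 1 fL) (hfR : ContDiff ℝ 1 fR)
    (hagree : ∀ x : EuclideanSpace ℝ (Fin d), x ⟨0, hd⟩ = 0 → fL x = fR x)
    (hfdef : ∀ x : EuclideanSpace ℝ (Fin d),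
      (x ⟨0, hd⟩ ≤ 0 → f x = fL x) ∧ (0 ≤ x ⟨0, hd⟩ → f x = fR x))
    (x v : EuclideanSpace ℝ (Fin d)) (n : ℕ) :
    Tendsto (fun δ : ℝ => ‖f^[n] (x + δ • v) - f^[n] x - δ • (Cn hd fL fR f n (x, v)) v‖ / δ)
      (nhdsWithin 0 (Set.Ioi 0)) (nhds 0) := by
  have h := hasDerivWithinAt_iterate_add_smul hd (hfL.differentiable one_ne_zero)
    (hfR.differentiable one_ne_zero) hagree hfdef x v n
  simpa using (hasDerivWithinAt_iff_isLittleO.1 h).norm_left.tendsto_div_nhds_zero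

theorem stmt6 {d : ℕ} (hd : 0 < d)
    (fL fR f : EuclideanSpace ℝ (Fin d) → EuclideanSpace ℝ (Fin d))
    (hfL : ContDiff ℝ 1 fL) (hfR : ContDiff ℝ 1 fR)
    (hagree : ∀ x : EuclideanSpace ℝ (Fin d), x ⟨0, hd⟩ = 0 → fL x = fR x)
    (hfdef : ∀ x : EuclideanSpace ℝ (Fin d),
      (x ⟨0, hd⟩ ≤ 0 → f x = fL x) ∧ (0 ≤ x ⟨0, hd⟩ → f x = fR x))
    (x v : EuclideanSpace ℝ (Fin d)) (n : ℕ) (hn : 1 ≤ n) :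
    Tendsto (fun δ : ℝ => ‖f^[n] (x + δ • v) - f^[n] x - δ • (Cn hd fL fR f n (x, v)) v‖ / δ)
      (nhdsWithin 0 (Set.Ioi 0)) (nhds 0) :=
  stmt6_general hd fL fR f hfL hfR hagree hfdef x v n
end

section
/- Let A be a real d×d matrix (d ≥ 1) with det(A) ≠ 0, and let c > 0. Then the spherical measure of the set {v ∈ S^{d−1} : ‖Av‖ ≤ c} is at most c^d / |det(A)|. -/
open MeasureTheory

theorem stmt8 {d : ℕ} (hd : 0 < d) (A : Matrix (Fin d) (Fin d) ℝ) (hA : A.det ≠ 0)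
    (c : ℝ) (hc : 0 < c) :
    volume {y : EuclideanSpace ℝ (Fin d) | ∃ v : EuclideanSpace ℝ (Fin d),
        ‖v‖ = 1 ∧ ‖Matrix.toEuclideanLin A v‖ ≤ c ∧ ∃ α : ℝ, 0 ≤ α ∧ α ≤ 1 ∧ y = α • v} /
      volume (Metric.ball (0 : EuclideanSpace ℝ (Fin d)) 1) ≤
    ENNReal.ofReal (c ^ d / |A.det|) := by
  have : Nontrivial (EuclideanSpace ℝ (Fin d)) := by
    have : Nonempty (Fin d) := ⟨⟨0, hd⟩⟩
    infer_instance
  set f := Matrix.toEuclideanLin A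
  have hdet : LinearMap.det f = A.det := by
    simp only [f, Matrix.toEuclideanLin_eq_toLin, LinearMap.det_toLin]
  have hf : LinearMap.det f ≠ 0 := by rw [hdet]; exact hA
  set S := {y : EuclideanSpace ℝ (Fin d) | ∃ v : EuclideanSpace ℝ (Fin d),
        ‖v‖ = 1 ∧ ‖Matrix.toEuclideanLin A v‖ ≤ c ∧ ∃ α : ℝ, 0 ≤ α ∧ α ≤ 1 ∧ y = α • v}
  have hsub : S ⊆ f ⁻¹' (Metric.closedBall 0 c) := by
    rintro y ⟨v, hv1, hvc, α, hα0, hα1, rfl⟩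
    simp only [Set.mem_preimage, Metric.mem_closedBall, dist_zero_right, LinearMap.map_smul, norm_smul,
      Real.norm_eq_abs, abs_of_nonneg hα0]
    calc α * ‖f v‖ ≤ 1 * c := by
          exact mul_le_mul hα1 hvc (norm_nonneg _) zero_le_one
      _ = c := one_mul c
  have hfinrank : Module.finrank ℝ (EuclideanSpace ℝ (Fin d)) = d := by simp
  have hS : volume S ≤ ENNReal.ofReal |A.det|⁻¹ * (ENNReal.ofReal (c ^ d) *
      volume (Metric.ball (0 : EuclideanSpace ℝ (Fin d)) 1)) := by
    calc volume S ≤ volume (f ⁻¹' (Metric.closedBall 0 c)) := measure_mono hsub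
      _ = ENNReal.ofReal |(LinearMap.det f)⁻¹| * volume (Metric.closedBall (0 : EuclideanSpace ℝ (Fin d)) c) :=
          Measure.addHaar_preimage_linearMap volume hf _
      _ = ENNReal.ofReal |A.det|⁻¹ * (ENNReal.ofReal (c ^ d) *
          volume (Metric.ball (0 : EuclideanSpace ℝ (Fin d)) 1)) := by
          rw [hdet, Measure.addHaar_closedBall volume 0 hc.le, hfinrank, abs_inv]
  have hball0 : volume (Metric.ball (0 : EuclideanSpace ℝ (Fin d)) 1) ≠ 0 :=
    (Metric.measure_ball_pos volume 0 one_pos).ne'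
  have hballtop : volume (Metric.ball (0 : EuclideanSpace ℝ (Fin d)) 1) ≠ ⊤ :=
    measure_ball_lt_top.ne
  rw [ENNReal.div_le_iff hball0 hballtop]
  calc volume S ≤ ENNReal.ofReal |A.det|⁻¹ * (ENNReal.ofReal (c ^ d) *
      volume (Metric.ball (0 : EuclideanSpace ℝ (Fin d)) 1)) := hS
    _ = ENNReal.ofReal (c ^ d / |A.det|) *
        volume (Metric.ball (0 : EuclideanSpace ℝ (Fin d)) 1) := by
        rw [← mul_assoc, ← ENNReal.ofReal_mul (by positivity), div_eq_mul_inv, mul_comm |A.det|⁻¹]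
end

section
/- Let f : ℝ^d → ℝ^d (d ≥ 1) be a continuous map for which 0 is an asymptotically stable fixed point, and let Ω ⊂ ℝ^d be a compact set such that f^n(x) → 0 as n → ∞ for every x ∈ Ω. Then the convergence is uniform on Ω: for every ε > 0 there exists N ∈ ℕ such that ‖f^n(x)‖ < ε for all n ≥ N and all x ∈ Ω. -/
open Metric Filter

theorem stmt15 {d : ℕ} (hd : 0 < d)
    (f : EuclideanSpace ℝ (Fin d) → EuclideanSpace ℝ (Fin d))
    (hf : Continuous f) (hfix : f 0 = 0)
    (hstab : AsympStableAtZero f)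
    (Ω : Set (EuclideanSpace ℝ (Fin d))) (hΩ : IsCompact Ω)
    (hbasin : ∀ x ∈ Ω, Tendsto (fun n : ℕ => f^[n] x) atTop
      (nhds (0 : EuclideanSpace ℝ (Fin d)))) :
    ∀ ε > (0 : ℝ), ∃ N : ℕ, ∀ n ≥ N, ∀ x ∈ Ω, ‖f^[n] x‖ < ε := by
  intro ε hε
  obtain ⟨δ, hδ, hLy⟩ := hstab.1 ε hε
  -- For each x ∈ Ω there is n with f^[n] x ∈ ball 0 δ, and by continuity an open nbhd
  have key : ∀ x ∈ Ω, ∃ n : ℕ, ∃ U : Set (EuclideanSpace ℝ (Fin d)),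
      IsOpen U ∧ x ∈ U ∧ ∀ y ∈ U, f^[n] y ∈ ball (0 : EuclideanSpace ℝ (Fin d)) δ := by
    intro x hx
    have := hbasin x hx
    have hmem : ∀ᶠ n in atTop, f^[n] x ∈ ball (0 : EuclideanSpace ℝ (Fin d)) δ :=
      this (ball_mem_nhds _ hδ)
    obtain ⟨n, hn⟩ := hmem.exists
    have hcont : Continuous (f^[n]) := hf.iterate n
    have : IsOpen ((f^[n]) ⁻¹' ball (0 : EuclideanSpace ℝ (Fin d)) δ) :=
      isOpen_ball.preimage hcont
    exact ⟨n, _, this, hn, fun y hy => hy⟩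
  choose! n U hUopen hxU hU using key
  obtain ⟨t, htΩ, htfin, hcover⟩ := hΩ.elim_finite_subcover_image (fun x hx => hUopen x hx)
    (fun x hx => Set.mem_biUnion hx (hxU x hx))
  refine ⟨htfin.toFinset.sup n, fun m hm x hx => ?_⟩
  obtain ⟨y, hyt, hyU⟩ := Set.mem_iUnion₂.mp (hcover hx)
  have hny : n y ≤ m :=
    le_trans (Finset.le_sup (htfin.mem_toFinset.mpr hyt)) hm
  have hball : f^[n y] x ∈ ball (0 : EuclideanSpace ℝ (Fin d)) δ := hU y (htΩ hyt) x hyU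
  have := hLy _ hball (m - n y)
  rw [← Function.iterate_add_apply, Nat.sub_add_cancel hny] at this
  simpa [mem_ball, dist_eq_norm] using this
end
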